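/- Let f : ℝ^N → ℝ be continuously differentiable and bounded below along the ray {x + αp : α > 0}, and let p be a descent direction at x, i.e., ⟨∇f(x), p⟩ < 0. Then for any 0 < c₁ < c₂ < 1 there exists a step size α > 0 satisfying the strong Wolfe conditions: f(x + αp) ≤ f(x) + c₁ α ⟨∇f(x), p⟩ and |⟨∇f(x + αp), p⟩| ≤ c₂ |⟨∇f(x), p⟩|. -/

import Mathlib

/-!
Restrict `f` to the ray, `φ t = f (x + t • p)`, and subtract the sufficient-decrease line:
`g t = φ t - c₁ t φ'(0)`. Then `g' 0 = (1 - c₁) φ'(0) < 0`, while `g` becomes positive far out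
because `φ` is bounded below and the line tends to `-∞`. A minimiser of `g` on such an interval
`[0, b]` is interior and negative, so it satisfies sufficient decrease strictly, and there
`φ' = c₁ φ'(0)`, which gives the curvature condition since `c₁ < c₂`.
-/

open Set Topology

theorem HasGradientAt.hasDerivAt_comp_add_smul {E : Type*} [NormedAddCommGroup E]
    [InnerProductSpace ℝ E] [CompleteSpace E] {f : E → ℝ} {f' x p : E} {t : ℝ}
    (hf : HasGradientAt f f' (x + t • p)) :
    HasDerivAt (fun s : ℝ => f (x + s • p)) (inner ℝ f' p) t := by
  have hline : HasDerivAt (fun s : ℝ => x + s • p) p t := by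
    simpa using ((hasDerivAt_id t).smul_const p).const_add x
  simpa [Function.comp_def] using hf.hasFDerivAt.comp_hasDerivAt t hline

/-- A one-sided Rolle theorem. -/
theorem exists_mem_Ioo_lt_and_hasDerivAt_eq_zero {g g' : ℝ → ℝ} {a b : ℝ} (hab : a < b)
    (hg : ∀ t ∈ Icc a b, HasDerivAt g (g' t) t) (hga : g' a < 0) (hgab : g a ≤ g b) :
    ∃ c ∈ Ioo a b, g c < g a ∧ g' c = 0 := by
  obtain ⟨t₀, ht₀, hgt₀⟩ : ∃ t₀ ∈ Ioo a b, g t₀ < g a := by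
    have hslope : ∀ᶠ t in 𝓝[>] a, slope g a t < 0 :=
      (hg a (left_mem_Icc.2 hab.le)).hasDerivWithinAt.limsup_slope_le' (lt_irrefl a) hga
    obtain ⟨t, hneg, ht⟩ := (hslope.and (Ioo_mem_nhdsGT hab)).exists
    exact ⟨t, ht, (slope_neg_iff_of_le ht.1.le).1 hneg⟩
  have hcont : ContinuousOn g (Icc a b) := fun t ht => (hg t ht).continuousAt.continuousWithinAt
  have hendpoints : ∀ z ∈ Icc a b \ Ioo a b, g t₀ < g z := by
    rintro z ⟨hz, hz'⟩
    rcases eq_endpoints_or_mem_Ioo_of_mem_Icc hz with rfl | rfl | h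
    · exact hgt₀
    · exact hgt₀.trans_le hgab
    · exact absurd h hz'
  obtain ⟨c, hc, hmin⟩ :=
    isCompact_Icc.exists_isMinOn_mem_subset hcont (Ioo_subset_Icc_self ht₀) hendpoints
  refine ⟨c, hc, (hmin (Ioo_subset_Icc_self ht₀)).trans_lt hgt₀, ?_⟩
  exact (hmin.isLocalMin (Icc_mem_nhds hc.1 hc.2)).hasDerivAt_eq_zero (hg c (Ioo_subset_Icc_self hc))

theorem exists_pos_lt_add_mul_and_deriv_eq {φ φ' : ℝ → ℝ} (hφ : ∀ t, HasDerivAt φ (φ' t) t)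
    (hbdd : ∃ B : ℝ, ∀ t : ℝ, 0 < t → B ≤ φ t) (hdesc : φ' 0 < 0) {c : ℝ} (hc₀ : 0 < c)
    (hc₁ : c < 1) :
    ∃ a > (0 : ℝ), φ a < φ 0 + c * a * φ' 0 ∧ φ' a = c * φ' 0 := by
  obtain ⟨B, hB⟩ := hbdd
  set g : ℝ → ℝ := fun t => φ t - c * φ' 0 * t
  have hg : ∀ t, HasDerivAt g (φ' t - c * φ' 0) t := fun t => by
    have := (hφ t).sub ((hasDerivAt_id' t).const_mul (c * φ' 0))
    rwa [mul_one] at this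
  have hslope : 0 < -(c * φ' 0) := by nlinarith
  obtain ⟨b, hb, hgb⟩ : ∃ b > (0 : ℝ), g 0 ≤ g b := by
    set b := max 1 ((φ 0 - B) / -(c * φ' 0))
    have hb : 0 < b := lt_max_of_lt_left one_pos
    have hφb : φ 0 - B ≤ b * -(c * φ' 0) :=
      (div_le_iff₀ hslope).1 (le_max_right _ _)
    refine ⟨b, hb, ?_⟩
    have hBb := hB b hb
    simp only [g]
    nlinarith
  obtain ⟨a, ha, hga, hg'a⟩ :=
    exists_mem_Ioo_lt_and_hasDerivAt_eq_zero hb (fun t _ => hg t) (by nlinarith) hgb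
  refine ⟨a, ha.1, ?_, by linarith⟩
  simp only [g] at hga
  linarith

theorem strong_wolfe_exists (N : ℕ)
    (f : EuclideanSpace ℝ (Fin N) → ℝ) (x p : EuclideanSpace ℝ (Fin N))
    (hf : ContDiff ℝ 1 f)
    (hbdd : ∃ B : ℝ, ∀ a : ℝ, 0 < a → B ≤ f (x + a • p))
    (hdesc : inner ℝ (gradient f x) p < (0:ℝ))
    (c₁ c₂ : ℝ) (hc₁ : 0 < c₁) (hc₁₂ : c₁ < c₂) (hc₂ : c₂ < 1) :
    ∃ a > (0:ℝ),
      f (x + a • p) ≤ f x + c₁ * a * inner ℝ (gradient f x) p ∧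
      |(inner ℝ (gradient f (x + a • p)) p : ℝ)| ≤ c₂ * |(inner ℝ (gradient f x) p : ℝ)| := by
  have hφ (t : ℝ) :=
    (hf.differentiable one_ne_zero (x + t • p)).hasGradientAt.hasDerivAt_comp_add_smul
  obtain ⟨a, ha, hdecrease, hcurvature⟩ := exists_pos_lt_add_mul_and_deriv_eq hφ hbdd
    (by simpa using hdesc) hc₁ (hc₁₂.trans hc₂)
  simp only [zero_smul, add_zero] at hdecrease hcurvature
  refine ⟨a, ha, hdecrease.le, ?_⟩
  rw [hcurvature, abs_mul, abs_of_pos hc₁]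
  exact mul_le_mul_of_nonneg_right hc₁₂.le (abs_nonneg _)
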